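/- arXiv:2401.17734 — 3 statements merged into one kernel-verified Lean document; each statement's English description precedes it below -/
import Mathlib

section
/- Let v be a node of the FCC lattice whose only tiled neighbors are at directions DNW, S, and NE (displacements (0,1,-1), (0,-1,0), (-1,1,0)). Then v is unmovable: the induced subgraph on {v+DNW, v+S, v+NE} is disconnected, and for every node w ≠ v in Z^3, the induced subgraph on {v+DNW, v+S, v+NE, w} remains disconnected. -/
def fccDirs : List (ℤ × ℤ × ℤ) :=
  [(0,0,1), (1,0,1), (0,-1,1), (0,1,0), (1,0,0), (1,-1,0),
   (0,-1,0), (-1,0,0), (-1,1,0), (0,0,-1), (-1,0,-1), (0,1,-1)]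

/-- The FCC lattice graph on ℤ³. -/
def fccGraph : SimpleGraph (ℤ × ℤ × ℤ) :=
  SimpleGraph.fromRel (fun v w => w - v ∈ fccDirs)

lemma fcc_adj_iff (x y : ℤ × ℤ × ℤ) :
    fccGraph.Adj x y ↔ x ≠ y ∧ (y - x ∈ fccDirs ∨ x - y ∈ fccDirs) := by
  simp [fccGraph, SimpleGraph.fromRel_adj]

lemma nadj (v a b : ℤ × ℤ × ℤ) (h1 : b - a ∉ fccDirs) (h2 : a - b ∉ fccDirs) :
    ¬ fccGraph.Adj (v + a) (v + b) := by
  rw [fcc_adj_iff]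
  rintro ⟨-, h | h⟩
  · rw [add_sub_add_left_eq_sub] at h; exact h1 h
  · rw [add_sub_add_left_eq_sub] at h; exact h2 h

lemma isolated_not_connected {V} {G : SimpleGraph V} {s : Set V} {a : V} (ha : a ∈ s)
    (hiso : ∀ z ∈ s, ¬ G.Adj a z) {b : V} (hb : b ∈ s) (hne : b ≠ a) :
    ¬ (G.induce s).Connected := by
  intro h
  obtain ⟨p⟩ := h.preconnected ⟨a, ha⟩ ⟨b, hb⟩
  cases p with
  | nil => exact hne rfl
  | cons hadj p => exact hiso _ (Subtype.mem _) hadj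

lemma key (v w : ℤ × ℤ × ℤ)
    (h1 : fccGraph.Adj w (v + (0, 1, -1)))
    (h2 : fccGraph.Adj w (v + (0, -1, 0)))
    (h3 : fccGraph.Adj w (v + (-1, 1, 0))) : w = v := by
  obtain ⟨v1, v2, v3⟩ := v
  obtain ⟨w1, w2, w3⟩ := w
  rw [fcc_adj_iff] at h1 h2 h3
  simp [fccDirs, Prod.ext_iff, Prod.sub_def, Prod.mk.injEq] at h1 h2 h3 ⊢
  omega

/-- If the only tiled neighbors of v are at DNW = (0,1,-1), S = (0,-1,0) and
NE = (-1,1,0), then v is unmovable: the induced subgraph on these three nodes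
is disconnected, and it stays disconnected after adding any single node w ≠ v. -/
theorem stmt_10 (v : ℤ × ℤ × ℤ) :
    ¬ (fccGraph.induce ({v + (0, 1, -1), v + (0, -1, 0), v + (-1, 1, 0)} :
        Set (ℤ × ℤ × ℤ))).Connected ∧
    ∀ w : ℤ × ℤ × ℤ, w ≠ v →
      ¬ (fccGraph.induce
          ({v + (0, 1, -1), v + (0, -1, 0), v + (-1, 1, 0), w} :
            Set (ℤ × ℤ × ℤ))).Connected := by
  set A := v + ((0 : ℤ), (1 : ℤ), (-1 : ℤ)) with hA
  set B := v + ((0 : ℤ), (-1 : ℤ), (0 : ℤ)) with hB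
  set C := v + ((-1 : ℤ), (1 : ℤ), (0 : ℤ)) with hC
  have hAA : ¬ fccGraph.Adj A A := fccGraph.irrefl
  have hBB : ¬ fccGraph.Adj B B := fccGraph.irrefl
  have hCC : ¬ fccGraph.Adj C C := fccGraph.irrefl
  have hAB : ¬ fccGraph.Adj A B := nadj v _ _ (by decide) (by decide)
  have hAC : ¬ fccGraph.Adj A C := nadj v _ _ (by decide) (by decide)
  have hBA : ¬ fccGraph.Adj B A := nadj v _ _ (by decide) (by decide)
  have hBC : ¬ fccGraph.Adj B C := nadj v _ _ (by decide) (by decide)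
  have hCA : ¬ fccGraph.Adj C A := nadj v _ _ (by decide) (by decide)
  have hCB : ¬ fccGraph.Adj C B := nadj v _ _ (by decide) (by decide)
  have hBneA : B ≠ A := by
    rw [hA, hB]; intro h; exact absurd (add_left_cancel h) (by decide)
  constructor
  · refine isolated_not_connected (a := A) (by simp) ?_ (b := B) (by simp) hBneA
    rintro z (rfl | rfl | rfl) <;> assumption
  · intro w hw
    have hnot : ¬ (fccGraph.Adj w A ∧ fccGraph.Adj w B ∧ fccGraph.Adj w C) := by
      rintro ⟨h1, h2, h3⟩; exact hw (key v w h1 h2 h3)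
    by_cases h1 : fccGraph.Adj w A
    · by_cases h2 : fccGraph.Adj w B
      · have h3 : ¬ fccGraph.Adj w C := fun h3 => hnot ⟨h1, h2, h3⟩
        refine isolated_not_connected (a := C) (by simp) ?_ (b := A)
          (by simp) ?_
        · rintro z (rfl | rfl | rfl | rfl)
          · exact hCA
          · exact hCB
          · exact hCC
          · exact fun h => h3 h.symm
        · rw [hA, hC]; intro h; exact absurd (add_left_cancel h) (by decide)
      · refine isolated_not_connected (a := B) (by simp) ?_ (b := A)
          (by simp) hBneA.symm
        rintro z (rfl | rfl | rfl | rfl)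
        · exact hBA
        · exact hBB
        · exact hBC
        · exact fun h => h2 h.symm
    · refine isolated_not_connected (a := A) (by simp) ?_ (b := B)
        (by simp) hBneA
      rintro z (rfl | rfl | rfl | rfl)
      · exact hAA
      · exact hAB
      · exact hAC
      · exact fun h => h1 h.symm
end

section
/- In the FCC lattice, an icicle configuration in which every tower has size one (i.e., T itself is a fragment F satisfying P1–P3 and no node lies below F) contains a removable node: the node v ∈ F with maximum xy-coordinate is removable, because its tiled neighbors {w ∈ F : w adjacent to v} induce a connected subgraph. Specifically, if F = {f(0), ..., f(m)} with xy(f(i)) = i all in one layer forming an aligned parallelogram of height h, then the tiled neighbors of f(m) are among {f(m-1), f(m-h), f(m-h+1), f(m-h-1)} (those that exist) and induce a connected subgraph of the FCC lattice graph. -/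
lemma fcc_adj_of_mem {a b : ℤ × ℤ × ℤ} (hne : a ≠ b)
    (hmem : b - a ∈ fccDirs ∨ a - b ∈ fccDirs) : fccGraph.Adj a b := by
  rw [fccGraph, SimpleGraph.fromRel_adj]; exact ⟨hne, hmem⟩

lemma star_connected {V : Type*} (G : SimpleGraph V) (S : Set V) (b : V) (hb : b ∈ S)
    (hstar : ∀ w ∈ S, w = b ∨ G.Adj w b) : (G.induce S).Connected := by
  rw [SimpleGraph.connected_iff]
  refine ⟨?_, ⟨⟨b, hb⟩⟩⟩
  have reach : ∀ w (hw : w ∈ S), (G.induce S).Reachable ⟨w, hw⟩ ⟨b, hb⟩ := by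
    intro w hw
    rcases hstar w hw with rfl | hadj
    · rfl
    · exact SimpleGraph.Adj.reachable hadj
  intro u v
  exact (reach u.1 u.2).trans (reach v.1 v.2).symm

lemma fcc_formula (h m : ℕ) (hh : 1 ≤ h) (f : ℕ → ℤ × ℤ × ℤ)
    (hcol : ∀ i < m, (i + 1) % h ≠ 0 → f (i + 1) = f i + (0, 1, 0))
    (hbot : ∀ i < m, (i + 1) % h = 0 → f (i + 1) = f (i + 1 - h) + (1, 0, 0)) :
    ∀ i ≤ m, f i = f 0 + (((i / h : ℕ) : ℤ), ((i % h : ℕ) : ℤ), 0) := by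
  intro i
  induction i using Nat.strong_induction_on with
  | _ i IH =>
    intro him
    match i with
    | 0 => simp
    | Nat.succ i =>
      have h0 : 0 < h := hh
      by_cases hz : (i + 1) % h = 0
      · obtain ⟨k, hk⟩ := Nat.dvd_of_mod_eq_zero hz
        obtain ⟨k', rfl⟩ : ∃ k', k = k' + 1 := by
          rcases Nat.eq_zero_or_pos k with rfl | h0'
          · simp at hk
          · exact ⟨k - 1, by omega⟩
        have hk2 : i + 1 = h * k' + h := by rw [hk, Nat.mul_succ]
        have hsub : i + 1 - h = h * k' := by omega
        have hb := hbot i (by omega) hz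
        have hIH := IH (i + 1 - h) (by omega) (by omega)
        have hd1 : (i + 1 - h) / h = k' := by rw [hsub]; exact Nat.mul_div_cancel_left _ h0
        have hm1 : (i + 1 - h) % h = 0 := by rw [hsub]; exact Nat.mul_mod_right _ _
        have hd2 : (i + 1) / h = k' + 1 := by rw [hk]; exact Nat.mul_div_cancel_left _ h0
        rw [hb, hIH, hd1, hm1, hd2, hz]
        simp [Prod.ext_iff, add_assoc]
      · have hc := hcol i (by omega) hz
        have hIH := IH i (by omega) (by omega)
        have e1 := Nat.div_add_mod i h
        have hrlt : i % h < h := Nat.mod_lt _ h0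
        have hr : i % h + 1 < h := by
          rcases Nat.lt_or_ge (i % h + 1) h with hlt | hge
          · exact hlt
          · exfalso; apply hz
            have : i + 1 = h * (i / h + 1) := by rw [Nat.mul_succ]; omega
            rw [this]; exact Nat.mul_mod_right _ _
        have hdm : (i + 1) / h = i / h ∧ (i + 1) % h = i % h + 1 := by
          rw [Nat.div_mod_unique h0]
          exact ⟨by omega, hr⟩
        rw [hc, hIH, hdm.1, hdm.2]
        push_cast
        simp [Prod.ext_iff, add_assoc]

/-- In an icicle all of whose towers have size one, i.e. the tiled set is a
single aligned parallelogram F = {f 0, ..., f m} of height h in one layer with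
xy(f i) = i (columns joined by S = (0,-1,0) steps, column bottoms joined by
SE = (-1,0,0) steps), the node f m of maximum xy-coordinate is removable: its
tiled neighbors are among {f (m-1), f (m-h), f (m-h+1), f (m-h-1)} and they
induce a connected subgraph of the FCC lattice graph. -/
theorem stmt_18 (h m : ℕ) (hh : 1 ≤ h) (hm : 1 ≤ m) (f : ℕ → ℤ × ℤ × ℤ)
    (hlayer : ∀ i ≤ m, (f i).2.2 = (f 0).2.2)
    (hxy : ∀ i ≤ m, (f i).1 * (h : ℤ) + (f i).2.1 = (i : ℤ))
    (hcol : ∀ i < m, (i + 1) % h ≠ 0 → f (i + 1) = f i + (0, 1, 0))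
    (hbot : ∀ i < m, (i + 1) % h = 0 → f (i + 1) = f (i + 1 - h) + (1, 0, 0)) :
    {w | (∃ i ≤ m, f i = w) ∧ fccGraph.Adj (f m) w} ⊆
      {f (m - 1), f (m - h), f (m - h + 1), f (m - h - 1)} ∧
    (fccGraph.induce
      {w | (∃ i ≤ m, f i = w) ∧ fccGraph.Adj (f m) w}).Connected := by
  have h0 : 0 < h := hh
  have F := fcc_formula h m hh f hcol hbot
  -- difference formula
  have D : ∀ i ≤ m, ∀ j ≤ m, f i - f j =
      (((i / h : ℕ) : ℤ) - ((j / h : ℕ) : ℤ), ((i % h : ℕ) : ℤ) - ((j % h : ℕ) : ℤ), 0) := by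
    intro i hi j hj
    rw [F i hi, F j hj, add_sub_add_left_eq_sub]
    simp [Prod.ext_iff]
  -- injectivity
  have NE : ∀ i ≤ m, ∀ j ≤ m, i ≠ j → f i ≠ f j := by
    intro i hi j hj hne heq
    have h1 := hxy i hi
    have h2 := hxy j hj
    rw [heq] at h1
    rw [h1] at h2
    exact hne (by exact_mod_cast h2)
  have e2 := Nat.div_add_mod m h
  have r2lt : m % h < h := Nat.mod_lt _ h0
  -- classification of tiled neighbors
  have CLS : ∀ i ≤ m, fccGraph.Adj (f m) (f i) →
      (i / h = m / h ∧ i % h + 1 = m % h) ∨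
      (i / h + 1 = m / h ∧ (i % h = m % h ∨ i % h = m % h + 1)) := by
    intro i hi hadj
    rw [fccGraph, SimpleGraph.fromRel_adj] at hadj
    obtain ⟨hne, hmem⟩ := hadj
    rw [D i hi m le_rfl, D m le_rfl i hi] at hmem
    have hle : i / h ≤ m / h := Nat.div_le_div_right hi
    have e1 := Nat.div_add_mod i h
    have r1lt : i % h < h := Nat.mod_lt _ h0
    simp only [fccDirs, List.mem_cons, List.not_mem_nil, or_false, Prod.mk.injEq] at hmem
    -- eliminate all cases with wrong z-coordinate, classify the rest
    rcases hmem with (⟨ha,hb,hc⟩|⟨ha,hb,hc⟩|⟨ha,hb,hc⟩|⟨ha,hb,hc⟩|⟨ha,hb,hc⟩|⟨ha,hb,hc⟩|⟨ha,hb,hc⟩|⟨ha,hb,hc⟩|⟨ha,hb,hc⟩|⟨ha,hb,hc⟩|⟨ha,hb,hc⟩|⟨ha,hb,hc⟩) |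
      (⟨ha,hb,hc⟩|⟨ha,hb,hc⟩|⟨ha,hb,hc⟩|⟨ha,hb,hc⟩|⟨ha,hb,hc⟩|⟨ha,hb,hc⟩|⟨ha,hb,hc⟩|⟨ha,hb,hc⟩|⟨ha,hb,hc⟩|⟨ha,hb,hc⟩|⟨ha,hb,hc⟩|⟨ha,hb,hc⟩) <;>
      first
        | omega
        | (exfalso
           have hq : i / h = m / h := by omega
           have hbr : h * (i / h) = h * (m / h) := by rw [hq]
           omega)
  have SUB1 : ∀ i ≤ m, i / h = m / h → i % h + 1 = m % h → i = m - 1 := by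
    intro i hi hq hr
    have e1 := Nat.div_add_mod i h
    have hbr : h * (i / h) = h * (m / h) := by rw [hq]
    omega
  have SUB2 : ∀ i ≤ m, i / h + 1 = m / h → i % h = m % h → i = m - h ∧ h ≤ m := by
    intro i hi hq hr
    have e1 := Nat.div_add_mod i h
    have hbr : h * (i / h) + h = h * (m / h) := by rw [← hq, Nat.mul_succ]
    omega
  have SUB3 : ∀ i ≤ m, i / h + 1 = m / h → i % h = m % h + 1 → i = m - h + 1 ∧ h ≤ m := by
    intro i hi hq hr
    have e1 := Nat.div_add_mod i h
    have hbr : h * (i / h) + h = h * (m / h) := by rw [← hq, Nat.mul_succ]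
    omega
  constructor
  · -- subset claim
    rintro w ⟨⟨i, hi, rfl⟩, hadj⟩
    rcases CLS i hi hadj with ⟨hq, hr⟩ | ⟨hq, hr | hr⟩
    · have := SUB1 i hi hq hr
      subst this; simp
    · have := (SUB2 i hi hq hr).1
      subst this; simp
    · have := (SUB3 i hi hq hr).1
      subst this; simp
  · -- connectivity
    rcases Nat.lt_or_ge m h with hmh | hmh
    · -- m < h : the only neighbor is f (m-1)
      have hd1 : (m - 1) / h = m / h := by
        rw [Nat.div_eq_of_lt (by omega), Nat.div_eq_of_lt hmh]
      have hr1 : (m - 1) % h = m - 1 := Nat.mod_eq_of_lt (by omega)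
      have hr2 : m % h = m := Nat.mod_eq_of_lt hmh
      have hbmem : f (m - 1) ∈ {w | (∃ i ≤ m, f i = w) ∧ fccGraph.Adj (f m) w} := by
        refine ⟨⟨m - 1, by omega, rfl⟩, ?_⟩
        apply fcc_adj_of_mem (NE m le_rfl (m - 1) (by omega) (by omega))
        left
        have : f (m - 1) - f m = (0, -1, 0) := by
          rw [D (m - 1) (by omega) m le_rfl, hd1, hr1, hr2]
          simp [Prod.ext_iff]
          omega
        rw [this]; decide
      apply star_connected _ _ _ hbmem
      rintro w ⟨⟨i, hi, rfl⟩, hadj⟩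
      left
      rcases CLS i hi hadj with ⟨hq, hr⟩ | ⟨hq, _⟩
      · rw [SUB1 i hi hq hr]
      · exfalso
        have hz : m / h = 0 := Nat.div_eq_of_lt hmh
        rw [hz] at hq
        exact Nat.succ_ne_zero _ hq
    · -- h ≤ m : hub is f (m-h)
      have hq2 : 1 ≤ m / h := (Nat.one_le_div_iff h0).2 hmh
      have hbr2 : h * (m / h - 1) + h = h * (m / h) := by
        have hq2' : m / h - 1 + 1 = m / h := by omega
        have h' : h * (m / h - 1 + 1) = h * (m / h - 1) + h := Nat.mul_succ h (m / h - 1)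
        rw [hq2'] at h'
        omega
      have hdm : (m - h) / h = m / h - 1 ∧ (m - h) % h = m % h := by
        rw [Nat.div_mod_unique h0]
        exact ⟨by omega, r2lt⟩
      have hbmem : f (m - h) ∈ {w | (∃ i ≤ m, f i = w) ∧ fccGraph.Adj (f m) w} := by
        refine ⟨⟨m - h, by omega, rfl⟩, ?_⟩
        apply fcc_adj_of_mem (NE m le_rfl (m - h) (by omega) (by omega))
        left
        have : f (m - h) - f m = (-1, 0, 0) := by
          rw [D (m - h) (by omega) m le_rfl, hdm.1, hdm.2]
          simp [Prod.ext_iff]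
          omega
        rw [this]; decide
      apply star_connected _ _ _ hbmem
      rintro w ⟨⟨i, hi, rfl⟩, hadj⟩
      rcases CLS i hi hadj with ⟨hq, hr⟩ | ⟨hq, hr | hr⟩
      · -- i in same column, one below: diff with hub is (1,-1,0)
        right
        apply fcc_adj_of_mem
        · apply NE i hi (m - h) (by omega)
          intro hieq
          rw [hieq, hdm.1] at hq
          omega
        · right
          have : f i - f (m - h) = (1, -1, 0) := by
            rw [D i hi (m - h) (by omega), hdm.1, hdm.2]
            simp [Prod.ext_iff]
            omega
          rw [this]; decide
      · -- i = m - h : it is the hub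
        left
        rw [(SUB2 i hi hq hr).1]
      · -- i = m - h + 1 : diff with hub is (0,1,0)
        right
        apply fcc_adj_of_mem
        · apply NE i hi (m - h) (by omega)
          intro hieq
          rw [hieq, hdm.2] at hr
          omega
        · right
          have : f i - f (m - h) = (0, 1, 0) := by
            rw [D i hi (m - h) (by omega), hdm.1, hdm.2]
            simp [Prod.ext_iff]
            omega
          rw [this]; decide
end

section
/- For the FCC lattice, if n tiles form an icicle whose uppermost parallelogram has width a and height b and whose towers each have depth at most c with a·b·c ≥ n and a,b,c = Θ(n^{1/3}), then the graph diameter of the tiled set is O(n^{1/3}); in contrast, a line of n tiles (n nodes consecutive in a single direction) has graph diameter exactly n - 1. -/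
/-- `T` is an icicle whose uppermost parallelogram has width `a` and height `b`
(spanned by NW = (1,0,0) and N = (0,1,0)) and whose towers extend in direction
DSW = (0,0,-1) with depth at least 1 and at most `c`. -/
def IsIcicle (T : Set (ℤ × ℤ × ℤ)) (a b c : ℕ) : Prop :=
  ∃ (v₀ : ℤ × ℤ × ℤ) (depth : ℕ → ℕ → ℕ),
    (∀ i j, i < a → j < b → 1 ≤ depth i j ∧ depth i j ≤ c) ∧
    T = {w | ∃ i j k : ℕ, i < a ∧ j < b ∧ k < depth i j ∧
          w = v₀ + ((i : ℤ), (j : ℤ), -(k : ℤ))}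

/-!
Two cells of an icicle are joined inside it by climbing one tower to the top parallelogram,
crossing the parallelogram along its two sides, and descending the other tower: at most
`a + b + 2c` steps, which is `O(n^{1/3})`. In a line of `n` tiles consecutive tiles are adjacent,
so its diameter is at most `n - 1`; conversely every FCC step has sup-norm `1`, so the two ends,
which are `(n - 1) • d` apart, need at least `n - 1` steps.
-/

namespace SimpleGraph

variable {V : Type*} {G : SimpleGraph V} {s : Set V}

lemma induce_edist_le_of_chain (g : ℕ → V) {m : ℕ} (hmem : ∀ t ≤ m, g t ∈ s)
    (hadj : ∀ t < m, G.Adj (g t) (g (t + 1))) {u w : s} (hu : (u : V) = g 0)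
    (hw : (w : V) = g m) : (G.induce s).edist u w ≤ m := by
  induction m generalizing w with
  | zero => simp [Subtype.ext (hu.trans hw.symm)]
  | succ m ih =>
    let w' : s := ⟨g m, hmem m (by omega)⟩
    have hw'w : (G.induce s).edist w' w = 1 :=
      edist_eq_one_iff_adj.mpr (by simpa [hw, w'] using hadj m (by omega))
    calc (G.induce s).edist u w ≤ (G.induce s).edist u w' + (G.induce s).edist w' w :=
          SimpleGraph.edist_triangle
      _ ≤ m + 1 := by
          rw [hw'w]
          gcongr
          exact ih (fun t ht => hmem t (by omega)) (fun t ht => hadj t (by omega)) rfl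
      _ = (m + 1 : ℕ) := by push_cast; rfl

lemma induce_edist_le_of_path (g : ℕ → V) {m i j : ℕ} (hmem : ∀ t ≤ m, g t ∈ s)
    (hadj : ∀ t < m, G.Adj (g t) (g (t + 1))) (hi : i ≤ m) (hj : j ≤ m) {u w : s}
    (hu : (u : V) = g i) (hw : (w : V) = g j) : (G.induce s).edist u w ≤ m := by
  wlog hij : i ≤ j generalizing i j u w
  · rw [edist_comm]
    exact this hj hi hw hu (by omega)
  calc (G.induce s).edist u w ≤ (j - i : ℕ) :=
        induce_edist_le_of_chain (fun t => g (i + t)) (fun t ht => hmem _ (by omega))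
          (fun t ht => by simpa [add_assoc] using hadj (i + t) (by omega)) (by simpa using hu)
          (by simpa [Nat.add_sub_cancel' hij] using hw)
    _ ≤ m := by exact_mod_cast (by omega : j - i ≤ m)

lemma Walk.norm_sub_le_length {E : Type*} [SeminormedAddCommGroup E] (f : V → E)
    (hf : ∀ u w, G.Adj u w → ‖f w - f u‖ ≤ 1) {u w : V} (p : G.Walk u w) :
    ‖f w - f u‖ ≤ p.length := by
  induction p with
  | nil => simp
  | @cons u x w hux _ ih =>
    calc ‖f w - f u‖ = ‖(f w - f x) + (f x - f u)‖ := by rw [sub_add_sub_cancel]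
      _ ≤ ‖f w - f x‖ + ‖f x - f u‖ := norm_add_le _ _
      _ ≤ _ := by push_cast [Walk.length_cons]; linarith [hf u x hux]

lemma le_edist_of_norm_sub_le {E : Type*} [SeminormedAddCommGroup E] (f : V → E)
    (hf : ∀ u w, G.Adj u w → ‖f w - f u‖ ≤ 1) {u w : V} {k : ℕ} (hk : (k : ℝ) ≤ ‖f w - f u‖) :
    (k : ℕ∞) ≤ G.edist u w := by
  rw [edist_eq_sInf]
  refine le_sInf ?_
  rintro _ ⟨p, rfl⟩
  show (k : ℕ∞) ≤ p.length
  exact_mod_cast hk.trans (p.norm_sub_le_length f hf)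

end SimpleGraph

open SimpleGraph

lemma fccGraph_adj_of_sub_mem {v w : ℤ × ℤ × ℤ} (h : w - v ∈ fccDirs) : fccGraph.Adj v w := by
  refine (fromRel_adj _ v w).mpr ⟨?_, Or.inl h⟩
  rintro rfl
  rw [sub_self] at h
  exact absurd h (by decide)

lemma norm_of_mem_fccDirs {d : ℤ × ℤ × ℤ} (hd : d ∈ fccDirs) : ‖d‖ = 1 := by
  simp only [fccDirs, List.mem_cons, List.not_mem_nil, or_false] at hd
  rcases hd with rfl | rfl | rfl | rfl | rfl | rfl | rfl | rfl | rfl | rfl | rfl | rfl <;>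
    simp [Prod.norm_def]

lemma norm_sub_le_one_of_fccGraph_adj {v w : ℤ × ℤ × ℤ} (h : fccGraph.Adj v w) :
    ‖w - v‖ ≤ 1 := by
  rcases ((fromRel_adj _ v w).mp h).2 with h | h
  · exact (norm_of_mem_fccDirs h).le
  · rw [norm_sub_rev]
    exact (norm_of_mem_fccDirs h).le

theorem IsIcicle.ediam_le {T : Set (ℤ × ℤ × ℤ)} {a b c : ℕ} (hT : IsIcicle T a b c) :
    (fccGraph.induce T).ediam ≤ (a + b + 2 * c : ℕ) := by
  obtain ⟨v₀, depth, hdepth, rfl⟩ := hT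
  set cell : ℕ → ℕ → ℕ → ℤ × ℤ × ℤ := fun i j k => v₀ + ((i : ℤ), (j : ℤ), -(k : ℤ))
  have hmem {i j k : ℕ} (hi : i < a) (hj : j < b) (hk : k < depth i j) :
      cell i j k ∈ {w | ∃ i j k : ℕ, i < a ∧ j < b ∧ k < depth i j ∧
        w = v₀ + ((i : ℤ), (j : ℤ), -(k : ℤ))} := ⟨i, j, k, hi, hj, hk, rfl⟩
  have hadj {i j k i' j' k' : ℕ} (h : ((i' : ℤ) - i, (j' : ℤ) - j, (k : ℤ) - k') ∈ fccDirs) :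
      fccGraph.Adj (cell i j k) (cell i' j' k') :=
    fccGraph_adj_of_sub_mem (by rwa [add_sub_add_left_eq_sub, Prod.mk_sub_mk, Prod.mk_sub_mk,
      neg_sub_neg])
  have htop {i j : ℕ} (hi : i < a) (hj : j < b) := hmem hi hj (hdepth i j hi hj).1
  have hvert {i j k : ℕ} (hi : i < a) (hj : j < b) (hk : k < depth i j) :
      (fccGraph.induce _).edist ⟨_, hmem hi hj hk⟩ ⟨_, htop hi hj⟩ ≤ c :=
    (induce_edist_le_of_path (cell i j) (fun t ht => hmem hi hj (by omega))
      (fun t _ => hadj (by push_cast; ring_nf; decide)) le_rfl (Nat.zero_le k)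
      rfl rfl).trans (by exact_mod_cast (hk.trans_le (hdepth i j hi hj).2).le)
  have hrow {i i' j : ℕ} (hi : i < a) (hi' : i' < a) (hj : j < b) :
      (fccGraph.induce _).edist ⟨_, htop hi hj⟩ ⟨_, htop hi' hj⟩ ≤ a :=
    (induce_edist_le_of_path (fun t => cell t j 0) (fun t ht => htop (by omega) hj)
      (fun t _ => hadj (by push_cast; ring_nf; decide)) (by omega : i ≤ a - 1)
      (by omega : i' ≤ a - 1) rfl rfl).trans (by exact_mod_cast Nat.sub_le a 1)
  have hcol {i j j' : ℕ} (hi : i < a) (hj : j < b) (hj' : j' < b) :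
      (fccGraph.induce _).edist ⟨_, htop hi hj⟩ ⟨_, htop hi hj'⟩ ≤ b :=
    (induce_edist_le_of_path (fun t => cell i t 0) (fun t ht => htop hi (by omega))
      (fun t _ => hadj (by push_cast; ring_nf; decide)) (by omega : j ≤ b - 1)
      (by omega : j' ≤ b - 1) rfl rfl).trans (by exact_mod_cast Nat.sub_le b 1)
  refine ediam_le_of_edist_le ?_
  rintro ⟨_, i, j, k, hi, hj, hk, rfl⟩ ⟨_, i', j', k', hi', hj', hk', rfl⟩
  calc _ ≤ _ + _ := SimpleGraph.edist_triangle (v := ⟨_, htop hi hj⟩)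
    _ ≤ _ + (_ + _) := add_le_add le_rfl (SimpleGraph.edist_triangle (v := ⟨_, htop hi' hj⟩))
    _ ≤ _ + (_ + (_ + _)) :=
        add_le_add le_rfl
          (add_le_add le_rfl (SimpleGraph.edist_triangle (v := ⟨_, htop hi' hj'⟩)))
    _ ≤ (c : ℕ∞) + (a + (b + c)) := by
        gcongr
        · exact hvert hi hj hk
        · exact hrow hi hi' hj
        · exact hcol hi' hj hj'
        · rw [edist_comm]
          exact hvert hi' hj' hk'
    _ = (a + b + 2 * c : ℕ) := by push_cast; ring

theorem fccGraph_induce_line_diam {n : ℕ} {v d : ℤ × ℤ × ℤ} (hd : d ∈ fccDirs) (hn : 0 < n) :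
    (fccGraph.induce {w | ∃ k : ℕ, k < n ∧ w = v + (k : ℤ) • d}).diam = n - 1 := by
  set L := {w | ∃ k : ℕ, k < n ∧ w = v + (k : ℤ) • d}
  have hmem {t : ℕ} (ht : t ≤ n - 1) : v + (t : ℤ) • d ∈ L := ⟨t, by omega, rfl⟩
  have hadj (t : ℕ) : fccGraph.Adj (v + (t : ℤ) • d) (v + ((t + 1 : ℕ) : ℤ) • d) :=
    fccGraph_adj_of_sub_mem (by simpa [add_smul] using hd)
  have hub : (fccGraph.induce L).ediam ≤ (n - 1 : ℕ) := by
    refine ediam_le_of_edist_le ?_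
    rintro ⟨_, k, hk, rfl⟩ ⟨_, l, hl, rfl⟩
    exact induce_edist_le_of_path (fun t => v + (t : ℤ) • d) (fun t => hmem)
      (fun t _ => hadj t) (by omega : k ≤ n - 1) (by omega : l ≤ n - 1) rfl rfl
  have hlb : ((n - 1 : ℕ) : ℕ∞) ≤ (fccGraph.induce L).edist ⟨_, hmem (Nat.zero_le _)⟩
      ⟨_, hmem le_rfl⟩ :=
    le_edist_of_norm_sub_le Subtype.val (fun _ _ h => norm_sub_le_one_of_fccGraph_adj h)
      (by rw [add_sub_add_left_eq_sub, ← sub_smul, norm_smul, norm_of_mem_fccDirs hd]; simp)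
  rw [diam, le_antisymm hub (hlb.trans edist_le_ediam), ENat.toNat_natCast]

/-- An icicle of n tiles whose parallelogram width a, height b and tower depth
bound c satisfy a·b·c ≥ n and a, b, c = Θ(n^(1/3)) has graph diameter
O(n^(1/3)); in contrast, a line of n tiles has graph diameter exactly n - 1. -/
theorem stmt_19 :
    (∀ K : ℝ, ∃ C : ℝ, ∀ (n a b c : ℕ) (T : Set (ℤ × ℤ × ℤ)),
      IsIcicle T a b c → T.ncard = n → 0 < n → n ≤ a * b * c →
      (a : ℝ) ≤ K * (n : ℝ) ^ ((1 : ℝ) / 3) →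
      (b : ℝ) ≤ K * (n : ℝ) ^ ((1 : ℝ) / 3) →
      (c : ℝ) ≤ K * (n : ℝ) ^ ((1 : ℝ) / 3) →
      ((fccGraph.induce T).diam : ℝ) ≤ C * (n : ℝ) ^ ((1 : ℝ) / 3)) ∧
    (∀ (n : ℕ) (v d : ℤ × ℤ × ℤ), d ∈ fccDirs → 0 < n →
      (fccGraph.induce
        {w | ∃ k : ℕ, k < n ∧ w = v + (k : ℤ) • d}).diam = n - 1) := by
  refine ⟨fun K => ⟨4 * K, fun n a b c T hT _ _ _ ha hb hc => ?_⟩,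
    fun n v d hd hn => fccGraph_induce_line_diam hd hn⟩
  have hdiam : (fccGraph.induce T).diam ≤ a + b + 2 * c :=
    ENat.toNat_le_of_le_natCast hT.ediam_le
  have hdiam' : ((fccGraph.induce T).diam : ℝ) ≤ a + b + 2 * c := by exact_mod_cast hdiam
  linarith
end
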